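/- arXiv:2105.12909 — 2 statements merged into one kernel-verified Lean document; each statement's English description precedes it below -/
import Mathlib

section
/- Let H_k, H_ℓ be separable RKHSs, λ > 0, and samples (x_i, y_i)_{i=1}^N. The unique minimizer over Hilbert–Schmidt operators C : H_ℓ → H_k of the regularized empirical risk (1/N) Σ_{i=1}^N ‖k_{x_i} − C ℓ_{y_i}‖_k² + λ‖C‖_{HS}² is C = Φ_x (L_{yy} + Nλ I_N)^{-1} Ψ_y^⊤, where Φ_x = [k_{x_1} … k_{x_N}], Ψ_y = [ℓ_{y_1} … ℓ_{y_N}] and L_{yy} = [ℓ(y_i, y_j)]_{i,j}. -/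
open scoped RealInnerProductSpace

/-- An abstract presentation of the Hilbert space `HS(K, H)` of Hilbert–Schmidt operators
from `K` to `H`: a Hilbert space `G` generated by rank-one tensors `t a b = a ⊗ b`
(the operator `g ↦ ⟪b, g⟫ a`), with the Hilbert–Schmidt inner product on rank-one
operators, a dense span, and the (continuous linear) action `ap` of elements of `G`
as operators `K → H`. -/
structure HSOps (H K G : Type*)
    [NormedAddCommGroup H] [InnerProductSpace ℝ H]
    [NormedAddCommGroup K] [InnerProductSpace ℝ K]
    [NormedAddCommGroup G] [InnerProductSpace ℝ G] where
  t : H → K → G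
  inner_t : ∀ a b a' b', ⟪t a b, t a' b'⟫ = ⟪a, a'⟫ * ⟪b, b'⟫
  dense_span :
    (Submodule.span ℝ (Set.range fun p : H × K => t p.1 p.2)).topologicalClosure = ⊤
  ap : G →L[ℝ] K →L[ℝ] H
  ap_t : ∀ a b g, ap (t a b) g = ⟪b, g⟫ • a

/-! The risk is a quadratic in `C`. Expanding it around `Ĉ` with `C = Ĉ + D`, the cross term
`-2 (N⁻¹ ∑ᵢ ⟪rᵢ, D ψᵢ⟫ - λ ⟪Ĉ, D⟫)`, with residuals `rᵢ = φᵢ - Ĉ ψᵢ`, vanishes by the normal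
equation `N λ Ĉ = ∑ᵢ rᵢ ⊗ ψᵢ` (read through `⟪a ⊗ b, D⟫ = ⟪a, D b⟫`), which in turn is just
`W (L + N λ I) = I`. Hence `risk (Ĉ + D) = risk Ĉ + N⁻¹ ∑ᵢ ‖D ψᵢ‖² + λ ‖D‖²`. The inverse exists
because `L` is a Gram matrix, so `L + N λ I` is positive definite. -/

theorem Matrix.posDef_gram_add_smul_one {n E : Type*} [Fintype n] [DecidableEq n]
    [NormedAddCommGroup E] [InnerProductSpace ℝ E] (v : n → E) {μ : ℝ} (hμ : 0 < μ) :
    (Matrix.gram ℝ v + μ • (1 : Matrix n n ℝ)).PosDef :=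
  Matrix.PosDef.posSemidef_add (Matrix.posSemidef_gram ℝ v) (Matrix.PosDef.one.smul hμ)

section RegularizedLeastSquares

variable {ι E F : Type*} [Fintype ι]
    [NormedAddCommGroup E] [InnerProductSpace ℝ E]
    [NormedAddCommGroup F] [InnerProductSpace ℝ F]

def regularizedRisk (A : ι → E →ₗ[ℝ] F) (y : ι → F) (c lam : ℝ) (C : E) : ℝ :=
  c * ∑ i, ‖y i - A i C‖ ^ 2 + lam * ‖C‖ ^ 2

theorem regularizedRisk_add_of_inner_eq {A : ι → E →ₗ[ℝ] F} {y : ι → F} {c lam : ℝ} {C₀ : E}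
    (hC₀ : ∀ D, c * ∑ i, ⟪y i - A i C₀, A i D⟫ = lam * ⟪C₀, D⟫) (D : E) :
    regularizedRisk A y c lam (C₀ + D) =
      regularizedRisk A y c lam C₀ + (c * ∑ i, ‖A i D‖ ^ 2 + lam * ‖D‖ ^ 2) := by
  have hres : ∀ i, ‖y i - A i (C₀ + D)‖ ^ 2 =
      ‖y i - A i C₀‖ ^ 2 - 2 * ⟪y i - A i C₀, A i D⟫ + ‖A i D‖ ^ 2 := fun i => by
    rw [map_add, ← sub_sub, norm_sub_sq_real]
  simp only [regularizedRisk, hres, Finset.sum_add_distrib, Finset.sum_sub_distrib,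
    ← Finset.mul_sum, norm_add_sq_real]
  linear_combination (-2) * hC₀ D

theorem regularizedRisk_lt_of_inner_eq {A : ι → E →ₗ[ℝ] F} {y : ι → F} {c lam : ℝ} {C₀ : E}
    (hc : 0 ≤ c) (hlam : 0 < lam)
    (hC₀ : ∀ D, c * ∑ i, ⟪y i - A i C₀, A i D⟫ = lam * ⟪C₀, D⟫) {C : E} (hC : C ≠ C₀) :
    regularizedRisk A y c lam C₀ < regularizedRisk A y c lam C := by
  have hD : C - C₀ ≠ 0 := sub_ne_zero.mpr hC
  rw [← add_sub_cancel C₀ C, regularizedRisk_add_of_inner_eq hC₀]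
  have : 0 ≤ c * ∑ i, ‖A i (C - C₀)‖ ^ 2 := by positivity
  have : 0 < lam * ‖C - C₀‖ ^ 2 := by positivity
  linarith

end RegularizedLeastSquares

namespace HSOps

variable {H K G : Type*}
    [NormedAddCommGroup H] [InnerProductSpace ℝ H]
    [NormedAddCommGroup K] [InnerProductSpace ℝ K]
    [NormedAddCommGroup G] [InnerProductSpace ℝ G]
    (T : HSOps H K G)

/-- Both sides are continuous in `D` and agree on rank-one tensors, hence on their dense span. -/
theorem inner_t_left (a : H) (b : K) (D : G) : ⟪T.t a b, D⟫ = ⟪a, T.ap D b⟫ := by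
  let f : G →L[ℝ] ℝ := innerSL ℝ (T.t a b)
  let g : G →L[ℝ] ℝ := (innerSL ℝ a).comp (T.ap.flip b)
  have hdense : Dense (Submodule.span ℝ (Set.range fun p : H × K => T.t p.1 p.2) : Set G) :=
    Submodule.dense_iff_topologicalClosure_eq_top.mpr T.dense_span
  have hspan : Set.EqOn f g (Submodule.span ℝ (Set.range fun p : H × K => T.t p.1 p.2)) := by
    intro x hx
    induction hx using Submodule.span_induction with
    | mem x hx =>
        obtain ⟨⟨a', b'⟩, rfl⟩ := hx
        simp only [f, g, coe_innerSL_apply, ContinuousLinearMap.comp_apply,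
          ContinuousLinearMap.flip_apply, T.inner_t, T.ap_t, map_smul, smul_eq_mul,
          real_inner_comm b b']
        ring
    | zero => simp
    | add x y _ _ hx hy => simp [map_add, hx, hy]
    | smul c x _ hx => simp [map_smul, hx]
  exact congrFun (Continuous.ext_on hdense f.continuous g.continuous hspan) D

theorem t_sum_smul_left {ι : Type*} (s : Finset ι) (c : ι → ℝ) (a : ι → H) (b : K) :
    T.t (∑ i ∈ s, c i • a i) b = ∑ i ∈ s, c i • T.t (a i) b :=
  ext_inner_right ℝ fun D => by
    simp only [inner_t_left, sum_inner, real_inner_smul_left]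

theorem ap_sum_sum_t_apply {n : Type*} [Fintype n] (W : Matrix n n ℝ) (φ : n → H) (ψ : n → K)
    (b : K) :
    T.ap (∑ p, ∑ q, W p q • T.t (φ p) (ψ q)) b = ∑ p, (∑ q, W p q * ⟪ψ q, b⟫) • φ p := by
  simp only [map_sum, map_smul, sum_apply,
    IsSMulApply.smul_apply, T.ap_t, smul_smul, Finset.sum_smul]

/-- The residual at `ψᵢ` is `∑ₚ μ W_{pi} φₚ` because `W (L + μ I) = I`. -/
theorem smul_sum_sum_t_eq_sum_t_residual {n : Type*} [Fintype n] [DecidableEq n]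
    (φ : n → H) (ψ : n → K) {μ : ℝ} {W : Matrix n n ℝ}
    (hW : W * (Matrix.gram ℝ ψ + μ • (1 : Matrix n n ℝ)) = 1) :
    μ • ∑ p, ∑ q, W p q • T.t (φ p) (ψ q) =
      ∑ i, T.t (φ i - T.ap (∑ p, ∑ q, W p q • T.t (φ p) (ψ q)) (ψ i)) (ψ i) := by
  have hentry : ∀ p i, μ * W p i = (1 : Matrix n n ℝ) p i - ∑ q, W p q * ⟪ψ q, ψ i⟫ := by
    intro p i
    rw [← hW, Matrix.mul_apply]
    simp [Matrix.gram_apply, Matrix.one_apply, mul_add, Finset.sum_add_distrib, mul_comm μ]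
  have hresidual : ∀ i, φ i - T.ap (∑ p, ∑ q, W p q • T.t (φ p) (ψ q)) (ψ i) =
      ∑ p, (μ * W p i) • φ p := by
    intro i
    simp only [ap_sum_sum_t_apply, hentry, sub_smul, Finset.sum_sub_distrib, Matrix.one_apply,
      ite_smul, one_smul, zero_smul, Finset.sum_ite_eq', Finset.mem_univ, if_true]
  simp only [hresidual, t_sum_smul_left, Finset.smul_sum, smul_smul]
  exact Finset.sum_comm

end HSOps

theorem stmt7_general {Hk Hl G : Type*}
    [NormedAddCommGroup Hk] [InnerProductSpace ℝ Hk]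
    [NormedAddCommGroup Hl] [InnerProductSpace ℝ Hl]
    [NormedAddCommGroup G] [InnerProductSpace ℝ G]
    (T : HSOps Hk Hl G)
    (N : ℕ) (hN : 0 < N) (lam : ℝ) (hlam : 0 < lam)
    (φ : Fin N → Hk) (ψ : Fin N → Hl)
    (L : Matrix (Fin N) (Fin N) ℝ) (hL : ∀ i j, L i j = ⟪ψ i, ψ j⟫)
    (W : Matrix (Fin N) (Fin N) ℝ)
    (hW : W = (L + ((N : ℝ) * lam) • (1 : Matrix (Fin N) (Fin N) ℝ))⁻¹)
    (risk : G → ℝ)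
    (hrisk : ∀ C, risk C = (N : ℝ)⁻¹ * ∑ i, ‖φ i - T.ap C (ψ i)‖ ^ 2 + lam * ‖C‖ ^ 2)
    (Chat : G) (hChat : Chat = ∑ i, ∑ j, W i j • T.t (φ i) (ψ j)) :
    ∀ C : G, risk Chat ≤ risk C ∧ (risk C = risk Chat → C = Chat) := by
  obtain rfl : L = Matrix.gram ℝ ψ := Matrix.ext hL
  have hNlam : 0 < (N : ℝ) * lam := by positivity
  have hWinv : W * (Matrix.gram ℝ ψ + ((N : ℝ) * lam) • 1) = 1 := by
    rw [hW]
    exact Matrix.nonsing_inv_mul _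
      ((Matrix.isUnit_iff_isUnit_det _).mp (Matrix.posDef_gram_add_smul_one ψ hNlam).isUnit)
  have hnormal := T.smul_sum_sum_t_eq_sum_t_residual φ ψ hWinv
  rw [← hChat] at hnormal
  set A : Fin N → G →ₗ[ℝ] Hk := fun i => T.ap.flip (ψ i)
  have hopt : ∀ D, (N : ℝ)⁻¹ * ∑ i, ⟪φ i - A i Chat, A i D⟫ = lam * ⟪Chat, D⟫ := by
    intro D
    have h := congrArg (⟪·, D⟫) hnormal
    simp only [real_inner_smul_left, sum_inner, T.inner_t_left] at h
    simp only [A, ContinuousLinearMap.coe_coe, ContinuousLinearMap.flip_apply, ← h]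
    field_simp
  obtain rfl : risk = regularizedRisk A φ (N : ℝ)⁻¹ lam := funext hrisk
  intro C
  rcases eq_or_ne C Chat with rfl | hne
  · simp
  · have hlt := regularizedRisk_lt_of_inner_eq (by positivity) hlam hopt hne
    exact ⟨hlt.le, fun h => absurd h hlt.ne'⟩

/-- The unique minimizer over Hilbert–Schmidt operators `C : H_ℓ → H_k` of the
regularized empirical risk `(1/N) ∑ᵢ ‖k_{xᵢ} − C ℓ_{yᵢ}‖² + λ‖C‖²_HS` is
`Ĉ = Φ_x (L_{yy} + NλI)⁻¹ Ψ_yᵀ`, i.e. the operator `g ↦ ∑_{i,j} [(L+NλI)⁻¹]_{ij} ⟪ℓ_{y_j}, g⟫ k_{xᵢ}`. -/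
theorem stmt7 {Hk Hl G : Type*}
    [NormedAddCommGroup Hk] [InnerProductSpace ℝ Hk] [CompleteSpace Hk]
    [NormedAddCommGroup Hl] [InnerProductSpace ℝ Hl] [CompleteSpace Hl]
    [NormedAddCommGroup G] [InnerProductSpace ℝ G] [CompleteSpace G]
    (T : HSOps Hk Hl G)
    (N : ℕ) (hN : 0 < N) (lam : ℝ) (hlam : 0 < lam)
    (φ : Fin N → Hk) (ψ : Fin N → Hl)
    (L : Matrix (Fin N) (Fin N) ℝ) (hL : ∀ i j, L i j = ⟪ψ i, ψ j⟫)
    (W : Matrix (Fin N) (Fin N) ℝ)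
    (hW : W = (L + ((N : ℝ) * lam) • (1 : Matrix (Fin N) (Fin N) ℝ))⁻¹)
    (risk : G → ℝ)
    (hrisk : ∀ C, risk C = (N : ℝ)⁻¹ * ∑ i, ‖φ i - T.ap C (ψ i)‖ ^ 2 + lam * ‖C‖ ^ 2)
    (Chat : G) (hChat : Chat = ∑ i, ∑ j, W i j • T.t (φ i) (ψ j)) :
    ∀ C : G, risk Chat ≤ risk C ∧ (risk C = risk Chat → C = Chat) :=
  stmt7_general T N hN lam hlam φ ψ L hL W hW risk hrisk Chat hChat
end

section
/- Let Ĉ : H_ℓ → H_k be a finite-rank operator, ε > 0, samples ỹ_1,…,ỹ_M ∈ 𝒴, and Q̂ := [⟨Ĉℓ_{ỹ_i}, Ĉℓ_{ỹ_j}⟩_k]_{i,j} ∈ ℝ^{M×M}. The unique minimizer over Hilbert–Schmidt operators D : H_k → H_ℓ of (1/M) Σ_{j=1}^M ‖ℓ_{ỹ_j} − D Ĉ ℓ_{ỹ_j}‖_ℓ² + ε‖D‖_{HS}² is D̂ = Ψ_ỹ (Q̂ + Mε I_M)^{-1} (Ĉ Ψ_ỹ)^⊤, i.e. D̂ = Σ_{i,j}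 [(Q̂ + Mε I)^{-1}]_{ij} ℓ_{ỹ_i} ⊗ Ĉℓ_{ỹ_j}. -/
/-!
The risk is a quadratic functional on the Hilbert space of Hilbert–Schmidt operators, so around
any `D₀` it expands exactly as `risk (D₀ + E) = risk D₀ + 2 ∇(E) + (M⁻¹ ∑ⱼ ‖E Ĉ ψ̃ⱼ‖² + ε ‖E‖²)`
with `∇` a continuous linear functional. At a critical point the remainder is nonnegative and
vanishes only for `E = 0`, which gives the unique minimum. Being continuous, `∇` vanishes as soon as
it vanishes on the rank-one operators `a ⊗ b`, whose span is dense; at `D̂` this reduces to the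
matrix identity `W (Q̂ + MεI) = I`, and `Q̂ + MεI` is invertible since a Gram matrix is positive
semidefinite.
-/

open scoped RealInnerProductSpace

open Matrix

section RidgeRegression

variable {ι G H : Type*} [Fintype ι]
  [NormedAddCommGroup G] [InnerProductSpace ℝ G] [NormedAddCommGroup H] [InnerProductSpace ℝ H]
  (c ε : ℝ) (L : ι → G →L[ℝ] H) (y : ι → H)

noncomputable def ridgeRisk (D : G) : ℝ := c * ∑ j, ‖y j - L j D‖ ^ 2 + ε * ‖D‖ ^ 2

/-- Half the Fréchet derivative of `ridgeRisk c ε L y` at `D`. -/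
noncomputable def ridgeGradient (D : G) : G →L[ℝ] ℝ :=
  c • ∑ j, (innerSL ℝ (L j D - y j)).comp (L j) + ε • innerSL ℝ D

theorem ridgeGradient_apply (D E : G) :
    ridgeGradient c ε L y D E = c * ∑ j, ⟪L j D - y j, L j E⟫ + ε * ⟪D, E⟫ := by
  simp only [ridgeGradient, _root_.add_apply, _root_.smul_apply, _root_.sum_apply,
    ContinuousLinearMap.coe_comp, Function.comp_apply, innerSL_apply_apply, smul_eq_mul]

theorem ridgeRisk_add (D E : G) :
    ridgeRisk c ε L y (D + E) = ridgeRisk c ε L y D + 2 * ridgeGradient c ε L y D E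
      + (c * ∑ j, ‖L j E‖ ^ 2 + ε * ‖E‖ ^ 2) := by
  have hterm : ∀ j, ‖y j - L j (D + E)‖ ^ 2
      = ‖y j - L j D‖ ^ 2 + 2 * ⟪L j D - y j, L j E⟫ + ‖L j E‖ ^ 2 := by
    intro j
    rw [map_add, ← norm_neg, show -(y j - (L j D + L j E)) = L j D - y j + L j E by abel,
      norm_add_sq_real, norm_sub_rev]
  simp only [ridgeRisk, ridgeGradient_apply, hterm, Finset.sum_add_distrib, ← Finset.mul_sum,
    norm_add_sq_real]
  ring

theorem ridgeRisk_uniqueMin_of_ridgeGradient_eq_zero (hc : 0 ≤ c) (hε : 0 < ε) {D₀ : G}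
    (hD₀ : ridgeGradient c ε L y D₀ = 0) (D : G) :
    ridgeRisk c ε L y D₀ ≤ ridgeRisk c ε L y D ∧
      (ridgeRisk c ε L y D = ridgeRisk c ε L y D₀ → D = D₀) := by
  have hexp := ridgeRisk_add c ε L y D₀ (D - D₀)
  rw [add_sub_cancel, hD₀, _root_.zero_apply, mul_zero, add_zero] at hexp
  have hfit : 0 ≤ c * ∑ j, ‖L j (D - D₀)‖ ^ 2 := by positivity
  have hreg : 0 ≤ ε * ‖D - D₀‖ ^ 2 := by positivity
  refine ⟨by linarith, fun heq => ?_⟩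
  have : ε * ‖D - D₀‖ ^ 2 = 0 := by linarith
  simpa [hε.ne', sub_eq_zero] using this

end RidgeRegression

namespace HSOps

variable {H K G : Type*}
  [NormedAddCommGroup H] [InnerProductSpace ℝ H]
  [NormedAddCommGroup K] [InnerProductSpace ℝ K]
  [NormedAddCommGroup G] [InnerProductSpace ℝ G]
  (T : HSOps H K G)

theorem ext_clm {F : Type*} [TopologicalSpace F] [AddCommGroup F] [Module ℝ F] [T2Space F]
    {f g : G →L[ℝ] F} (h : ∀ a b, f (T.t a b) = g (T.t a b)) : f = g :=
  ContinuousLinearMap.ext_on (Submodule.dense_iff_topologicalClosure_eq_top.2 T.dense_span)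
    (by rintro _ ⟨⟨a, b⟩, rfl⟩; exact h a b)

variable {ι κ : Type*} [Fintype ι] [Fintype κ]

/-- The operator `A W Bᵀ`, where `A = [a₁ … aₘ]` and `B = [b₁ … bₙ]`. -/
noncomputable def ofMatrix (W : Matrix ι κ ℝ) (a : ι → H) (b : κ → K) : G :=
  ∑ i, ∑ j, W i j • T.t (a i) (b j)

theorem ap_ofMatrix (W : Matrix ι κ ℝ) (a : ι → H) (b : κ → K) (g : K) :
    T.ap (T.ofMatrix W a b) g = ∑ i, ∑ j, (W i j * ⟪b j, g⟫) • a i := by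
  simp only [ofMatrix, map_sum, map_smul, FunLike.coe_sum, Finset.sum_apply,
    FunLike.coe_smul, Pi.smul_apply, T.ap_t, smul_smul]

theorem inner_ofMatrix_t (W : Matrix ι κ ℝ) (a : ι → H) (b : κ → K) (a' : H) (b' : K) :
    ⟪T.ofMatrix W a b, T.t a' b'⟫ = ∑ i, ∑ j, W i j * (⟪a i, a'⟫ * ⟪b j, b'⟫) := by
  simp only [ofMatrix, sum_inner, real_inner_smul_left, T.inner_t]

theorem sum_inner_ap_ofMatrix_sub_ap_t [DecidableEq ι] (ψ : ι → H) (u : ι → K)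
    (W : Matrix ι ι ℝ) (r : ℝ) (hW : W * (gram ℝ u + r • 1) = 1) (a : H) (b : K) :
    ∑ j, ⟪T.ap (T.ofMatrix W ψ u) (u j) - ψ j, T.ap (T.t a b) (u j)⟫
      = -r * ⟪T.ofMatrix W ψ u, T.t a b⟫ := by
  set α : ι → ℝ := fun i => ⟪ψ i, a⟫
  -- the regularized normal equations `W Q = I - r W` turn each residual into `-r` times a fit term
  have hWgram : W * gram ℝ u = 1 - r • W := by
    rw [eq_sub_iff_add_eq, ← hW, Matrix.mul_add, Matrix.mul_smul, Matrix.mul_one]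
  have hfit : ∀ j, ⟪T.ap (T.ofMatrix W ψ u) (u j), a⟫ = (α ᵥ* (W * gram ℝ u)) j := by
    intro j
    simp only [ap_ofMatrix, sum_inner, real_inner_smul_left, vecMul, dotProduct, mul_apply,
      gram, of_apply, Finset.mul_sum, α]
    exact Finset.sum_congr rfl fun i _ => Finset.sum_congr rfl fun k _ => by ring
  simp only [T.ap_t, real_inner_smul_right, inner_sub_left, hfit, hWgram, inner_ofMatrix_t,
    vecMul_sub, vecMul_one, vecMul_smul, Pi.sub_apply, Pi.smul_apply, smul_eq_mul]
  simp only [Finset.mul_sum]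
  rw [Finset.sum_comm]
  refine Finset.sum_congr rfl fun j _ => ?_
  simp only [vecMul, dotProduct, α, mul_sub, Finset.mul_sum]
  rw [sub_sub_cancel_left, ← Finset.sum_neg_distrib]
  refine Finset.sum_congr rfl fun i _ => ?_
  rw [real_inner_comm b]
  ring

end HSOps

theorem stmt8_general {Hk Hl G : Type*}
    [NormedAddCommGroup Hk] [InnerProductSpace ℝ Hk]
    [NormedAddCommGroup Hl] [InnerProductSpace ℝ Hl]
    [NormedAddCommGroup G] [InnerProductSpace ℝ G]
    (T : HSOps Hl Hk G)
    (Chat : Hl →L[ℝ] Hk)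
    (M : ℕ) (hM : 0 < M) (ε : ℝ) (hε : 0 < ε)
    (ψ : Fin M → Hl)
    (Q : Matrix (Fin M) (Fin M) ℝ) (hQ : ∀ i j, Q i j = ⟪Chat (ψ i), Chat (ψ j)⟫)
    (W : Matrix (Fin M) (Fin M) ℝ)
    (hW : W = (Q + ((M : ℝ) * ε) • (1 : Matrix (Fin M) (Fin M) ℝ))⁻¹)
    (risk : G → ℝ)
    (hrisk : ∀ D, risk D = (M : ℝ)⁻¹ * ∑ j, ‖ψ j - T.ap D (Chat (ψ j))‖ ^ 2 + ε * ‖D‖ ^ 2)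
    (Dhat : G) (hDhat : Dhat = ∑ i, ∑ j, W i j • T.t (ψ i) (Chat (ψ j))) :
    ∀ D : G, risk Dhat ≤ risk D ∧ (risk D = risk Dhat → D = Dhat) := by
  set u : Fin M → Hk := fun j => Chat (ψ j)
  have hMε : 0 < (M : ℝ) * ε := by positivity
  have hQ_gram : Q = gram ℝ u := Matrix.ext hQ
  have hWA : W * (gram ℝ u + ((M : ℝ) * ε) • 1) = 1 := by
    have hA := PosDef.posSemidef_add (posSemidef_gram ℝ u) (PosDef.one.smul hMε)
    rw [hW, hQ_gram]
    exact nonsing_inv_mul _ ((isUnit_iff_isUnit_det _).1 hA.isUnit)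
  have hrisk_eq : risk = ridgeRisk (M : ℝ)⁻¹ ε (fun j => T.ap.flip (u j)) ψ := funext hrisk
  have hDhat_eq : Dhat = T.ofMatrix W ψ u := hDhat
  have hcrit : ridgeGradient (M : ℝ)⁻¹ ε (fun j => T.ap.flip (u j)) ψ Dhat = 0 := by
    refine T.ext_clm fun a b => ?_
    have hgen := T.sum_inner_ap_ofMatrix_sub_ap_t ψ u W _ hWA a b
    rw [← hDhat_eq] at hgen
    simp only [ridgeGradient_apply, ContinuousLinearMap.flip_apply, hgen, _root_.zero_apply]
    field_simp
    ring
  rw [hrisk_eq]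
  exact ridgeRisk_uniqueMin_of_ridgeGradient_eq_zero _ _ _ _ (by positivity) hε hcrit

/-- Given a finite-rank operator `Ĉ : H_ℓ → H_k`, `ε > 0`, points
`ỹ₁,…,ỹ_M` with features `ψ̃ⱼ = ℓ_{ỹⱼ}`, and `Q̂ = [⟪Ĉψ̃ᵢ, Ĉψ̃ⱼ⟫]`, the unique minimizer
over Hilbert–Schmidt operators `D : H_k → H_ℓ` of
`(1/M) ∑ⱼ ‖ψ̃ⱼ − D Ĉ ψ̃ⱼ‖² + ε‖D‖²_HS` is
`D̂ = Ψ_ỹ (Q̂ + MεI)⁻¹ (ĈΨ_ỹ)ᵀ = ∑_{i,j} [(Q̂ + MεI)⁻¹]_{ij} ψ̃ᵢ ⊗ Ĉψ̃ⱼ`. -/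
theorem stmt8 {Hk Hl G : Type*}
    [NormedAddCommGroup Hk] [InnerProductSpace ℝ Hk] [CompleteSpace Hk]
    [NormedAddCommGroup Hl] [InnerProductSpace ℝ Hl] [CompleteSpace Hl]
    [NormedAddCommGroup G] [InnerProductSpace ℝ G] [CompleteSpace G]
    (T : HSOps Hl Hk G)
    (Chat : Hl →L[ℝ] Hk) (hfinrank : FiniteDimensional ℝ (LinearMap.range Chat.toLinearMap))
    (M : ℕ) (hM : 0 < M) (ε : ℝ) (hε : 0 < ε)
    (ψ : Fin M → Hl)
    (Q : Matrix (Fin M) (Fin M) ℝ) (hQ : ∀ i j, Q i j = ⟪Chat (ψ i), Chat (ψ j)⟫)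
    (W : Matrix (Fin M) (Fin M) ℝ)
    (hW : W = (Q + ((M : ℝ) * ε) • (1 : Matrix (Fin M) (Fin M) ℝ))⁻¹)
    (risk : G → ℝ)
    (hrisk : ∀ D, risk D = (M : ℝ)⁻¹ * ∑ j, ‖ψ j - T.ap D (Chat (ψ j))‖ ^ 2 + ε * ‖D‖ ^ 2)
    (Dhat : G) (hDhat : Dhat = ∑ i, ∑ j, W i j • T.t (ψ i) (Chat (ψ j))) :
    ∀ D : G, risk Dhat ≤ risk D ∧ (risk D = risk Dhat → D = Dhat) :=
  stmt8_general T Chat M hM ε hε ψ Q hQ W hW risk hrisk Dhat hDhat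
end
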